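/- Let N(t,x) = Σ_{n,k} a(n,k) t^k x^n where a(n,k) is the number of paths of length 2n with exactly 2k steps below the x-axis. Then N(t,x) = 1/(1 − x·c(x) − t·x·c(tx)), where c is the Catalan generating function; consequently a(n,k) = C_n for 0 ≤ k ≤ n and a(n,k) = 0 for k > n. -/

import Mathlib

def stepVal (b : Bool) : ℤ := if b then 1 else -1

def psum {m : ℕ} (f : Fin m → Bool) (p : ℕ) : ℤ :=
  (((List.ofFn f).take p).map stepVal).sum

def belowSteps {m : ℕ} (f : Fin m → Bool) : Finset (Fin m) :=
  Finset.univ.filter fun i => min (psum f i.1) (psum f (i.1 + 1)) < 0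

/-- a(n,k): the number of paths of length 2n with exactly 2k steps below the x-axis. -/
def aCount (n k : ℕ) : ℕ :=
  ((Finset.univ : Finset (Fin (2 * n) → Bool)).filter fun f =>
      psum f (2 * n) = 0 ∧ (belowSteps f).card = 2 * k).card

/-- c(x) in ℤ[[t]][[x]]. -/
noncomputable def cx : PowerSeries (PowerSeries ℤ) :=
  PowerSeries.mk fun n => ((catalan n : ℤ) : PowerSeries ℤ)

/-- c(tx) in ℤ[[t]][[x]]. -/
noncomputable def ctx : PowerSeries (PowerSeries ℤ) :=
  PowerSeries.mk fun n => ((catalan n : ℤ) : PowerSeries ℤ) * PowerSeries.X ^ n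

/-- The variable t. -/
noncomputable def tvar : PowerSeries (PowerSeries ℤ) :=
  PowerSeries.C (R := PowerSeries ℤ) PowerSeries.X

/-- N(t,x) = Σ a(n,k) tᵏ xⁿ. -/
noncomputable def Ngf : PowerSeries (PowerSeries ℤ) :=
  PowerSeries.mk fun n => PowerSeries.mk fun k => (aCount n k : ℤ)

/-!
A nonempty path factors uniquely as a prime component followed by a shorter path. A prime component
of semilength `j + 1` is either `U w D`, which has no step below the axis, or its mirror image, all
`2(j + 1)` of whose steps are below; in both cases `w` is one of the `C_j` Dyck paths of semilength
`j` (the same factorisation, restricted to Dyck paths, gives their Catalan recursion). Weighting a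
path with `2k` steps below the axis by `tᵏ`, the `xⁿ`-coefficients `Nₙ` of `N` therefore satisfy
`N₀ = 1`, `Nₙ₊₁ = ∑_{j+i=n} C_j (1 + t^{j+1}) Nᵢ`, which is the functional equation
`N = 1 + x (c(x) + t c(tx)) N`. The polynomials `C_n (1 + t + ⋯ + tⁿ)` satisfy the same recursion:
exchanging `i` and `j` in the `t^{j+1}` half of the sum and using
`(1 + ⋯ + tⁱ) + t^{i+1} (1 + ⋯ + tʲ) = 1 + ⋯ + t^{i+j+1}` leaves the Catalan recursion.
-/

open Finset

lemma geom_sum_add_pow_mul_geom_sum {R : Type*} [Semiring R] (x : R) (m n : ℕ) :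
    ∑ i ∈ range m, x ^ i + x ^ m * ∑ i ∈ range n, x ^ i = ∑ i ∈ range (m + n), x ^ i := by
  simp [sum_range_add, mul_sum, pow_add]

namespace LatticePath

@[simp] lemma stepVal_true : stepVal true = 1 := rfl

@[simp] lemma stepVal_false : stepVal false = -1 := rfl

lemma stepVal_eq_one_or_neg_one (b : Bool) : stepVal b = 1 ∨ stepVal b = -1 := by
  cases b <;> simp

def rise (l : List Bool) : ℤ := (l.map stepVal).sum

def height (l : List Bool) (p : ℕ) : ℤ := rise (l.take p)

@[simp] lemma rise_nil : rise [] = 0 := rfl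

@[simp] lemma rise_cons (b : Bool) (l : List Bool) : rise (b :: l) = stepVal b + rise l := by
  simp [rise]

@[simp] lemma rise_append (a b : List Bool) : rise (a ++ b) = rise a + rise b := by
  simp [rise]

lemma rise_emod_two (l : List Bool) : rise l % 2 = l.length % 2 := by
  induction l with
  | nil => simp
  | cons b l ih =>
    rw [rise_cons, List.length_cons]
    rcases stepVal_eq_one_or_neg_one b with h | h <;> rw [h] <;> omega

@[simp] lemma height_zero (l : List Bool) : height l 0 = 0 := by simp [height]

lemma height_of_length_le {l : List Bool} {p : ℕ} (h : l.length ≤ p) : height l p = rise l := by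
  rw [height, List.take_of_length_le h]

lemma height_cons_succ (b : Bool) (l : List Bool) (p : ℕ) :
    height (b :: l) (p + 1) = stepVal b + height l p := by
  simp [height]

lemma height_append (a b : List Bool) (p : ℕ) :
    height (a ++ b) p = height a p + height b (p - a.length) := by
  simp [height, List.take_append]

lemma height_append_length_add {a : List Bool} (ha : rise a = 0) (b : List Bool) (p : ℕ) :
    height (a ++ b) (a.length + p) = height b p := by
  rw [height_append, height_of_length_le (by omega), ha, zero_add, Nat.add_sub_cancel_left]

lemma height_take (l : List Bool) (q p : ℕ) : height (l.take q) p = height l (min p q) := by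
  simp [height, List.take_take]

lemma height_succ {l : List Bool} {i : ℕ} (hi : i < l.length) :
    height l (i + 1) = height l i + stepVal l[i] := by
  simp only [height]
  rw [List.take_add_one, List.getElem?_eq_getElem hi, rise_append]
  simp [rise]

-- `orient false` reflects a path in the x-axis, `orient true` is the identity.
def orient (b : Bool) (l : List Bool) : List Bool := l.map (· == b)

@[simp] lemma orient_orient (b : Bool) (l : List Bool) : orient b (orient b l) = l := by
  simp [orient, Function.comp_def]

@[simp] lemma orient_true (l : List Bool) : orient true l = l := by
  simp [orient]

@[simp] lemma length_orient (b : Bool) (l : List Bool) : (orient b l).length = l.length := by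
  simp [orient]

lemma stepVal_beq (c b : Bool) : stepVal (c == b) = stepVal b * stepVal c := by
  cases b <;> cases c <;> rfl

lemma rise_orient (b : Bool) (l : List Bool) : rise (orient b l) = stepVal b * rise l := by
  induction l with
  | nil => simp [orient]
  | cons c l ih =>
    simp only [orient, List.map_cons, rise_cons] at ih ⊢
    rw [ih, stepVal_beq, mul_add]

lemma height_orient (b : Bool) (l : List Bool) (p : ℕ) :
    height (orient b l) p = stepVal b * height l p := by
  rw [height, height, ← rise_orient, orient, orient, List.map_take]

def below (l : List Bool) : ℕ := #{i ∈ range l.length | min (height l i) (height l (i + 1)) < 0}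

lemma card_belowSteps {m : ℕ} (f : Fin m → Bool) : #(belowSteps f) = below (List.ofFn f) := by
  rw [belowSteps, below, card_filter, card_filter, List.length_ofFn, ← Fin.sum_univ_eq_sum_range]
  rfl

lemma below_append {a : List Bool} (ha : rise a = 0) (b : List Bool) :
    below (a ++ b) = below a + below b := by
  simp only [below, card_filter, List.length_append, sum_range_add]
  congr 1
  · refine sum_congr rfl fun i hi => ?_
    have hi : i + 1 ≤ a.length := mem_range.mp hi
    simp only [height_append, Nat.sub_eq_zero_of_le hi,
      Nat.sub_eq_zero_of_le (Nat.le_of_succ_le hi), height_zero, add_zero]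
  · refine sum_congr rfl fun i _ => ?_
    rw [add_assoc, height_append_length_add ha, height_append_length_add ha]

lemma below_eq_zero_of_nonneg {l : List Bool} (h : ∀ p, 0 ≤ height l p) : below l = 0 := by
  rw [below, card_eq_zero, filter_eq_empty_iff]
  exact fun i _ => not_lt.mpr (le_min (h i) (h (i + 1)))

lemma below_eq_length_of_nonpos {l : List Bool} (h : ∀ p, height l p ≤ 0) :
    below l = l.length := by
  rw [below, filter_true_of_mem, card_range]
  intro i hi
  have hi : i < l.length := mem_range.mp hi
  have hstep := height_succ hi
  have := h i
  have := h (i + 1)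
  rw [min_lt_iff]
  rcases stepVal_eq_one_or_neg_one l[i] with hs | hs <;> omega

def IsDyck (l : List Bool) : Prop := rise l = 0 ∧ ∀ p, 0 ≤ height l p

lemma exists_isDyck_append_false {t : List Bool} (h : ∃ p, height t p < 0) :
    ∃ w r, IsDyck w ∧ t = w ++ false :: r := by
  classical
  obtain ⟨p, hp, hmin⟩ : ∃ p, height t p < 0 ∧ ∀ q < p, 0 ≤ height t q :=
    ⟨Nat.find h, Nat.find_spec h, fun q hq => not_lt.mp (Nat.find_min h hq)⟩
  obtain ⟨i, rfl⟩ : ∃ i, p = i + 1 := Nat.exists_eq_succ_of_ne_zero fun h0 => by simp [h0] at hp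
  have hi : i < t.length := by
    by_contra hle
    have := hmin t.length (by omega)
    rw [height_of_length_le (by omega)] at hp
    rw [height_of_length_le le_rfl] at this
    omega
  have hstep := height_succ hi
  have hprev := hmin i (by omega)
  have hti : t[i] = false := by
    cases hb : t[i]
    · rfl
    · rw [hb, stepVal_true] at hstep; omega
  rw [hti, stepVal_false] at hstep
  have hzero : height t i = 0 := by omega
  refine ⟨t.take i, t.drop (i + 1), ⟨hzero, fun q => ?_⟩, ?_⟩
  · rw [height_take]; exact hmin _ (by omega)
  · rw [← hti, List.getElem_cons_drop, List.take_append_drop]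

lemma height_isDyck_append_false {w : List Bool} (hw : IsDyck w) (r : List Bool) :
    height (w ++ false :: r) (w.length + 1) = -1 := by
  rw [height_append_length_add hw.1, height_cons_succ]
  simp

lemma isDyck_append_false_inj {w w' r r' : List Bool} (hw : IsDyck w) (hw' : IsDyck w')
    (h : w ++ false :: r = w' ++ false :: r') : w = w' ∧ r = r' := by
  rcases List.append_eq_append_iff.mp h with ⟨s, rfl, hs⟩ | ⟨s, rfl, hs⟩
  · cases s with
    | nil => simp_all
    | cons x s =>
      obtain ⟨rfl, -⟩ := List.cons_eq_cons.mp hs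
      have := hw'.2 (w.length + 1)
      rw [height_isDyck_append_false hw] at this
      omega
  · cases s with
    | nil => simp_all
    | cons x s =>
      obtain ⟨rfl, -⟩ := List.cons_eq_cons.mp hs
      have := hw.2 (w'.length + 1)
      rw [height_isDyck_append_false hw'] at this
      omega

-- For a Dyck path `w`, `prime true w = U w D` is a positive prime path and `prime false w` is
-- its reflection, a negative one.
def prime (b : Bool) (w : List Bool) : List Bool := orient b (true :: (w ++ [false]))

lemma prime_append (b : Bool) (w r : List Bool) :
    prime b w ++ r = orient b (true :: (w ++ false :: orient b r)) := by
  simp [prime, orient, Function.comp_def]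

@[simp] lemma length_prime (b : Bool) (w : List Bool) : (prime b w).length = w.length + 2 := by
  simp [prime]

lemma rise_prime (b : Bool) {w : List Bool} (hw : rise w = 0) : rise (prime b w) = 0 := by
  simp [prime, rise_orient, hw]

lemma isDyck_prime_true {w : List Bool} (hw : IsDyck w) : IsDyck (prime true w) := by
  refine ⟨rise_prime true hw.1, fun p => ?_⟩
  rcases p with _ | p
  · simp
  · have hfalse : -1 ≤ height [false] (p - w.length) := by
      rcases p - w.length with _ | q <;> simp [height]
    rw [prime, orient_true, height_cons_succ, height_append, stepVal_true]
    linarith [hw.2 p]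

lemma exists_prime_append {l : List Bool} (hl : rise l = 0) (hne : l ≠ []) :
    ∃ b w r, IsDyck w ∧ l = prime b w ++ r := by
  obtain ⟨b, t, rfl⟩ := List.exists_cons_of_ne_nil hne
  have hrise : rise (orient b t) = -1 := by
    rw [rise_cons] at hl
    rw [rise_orient]
    rcases stepVal_eq_one_or_neg_one b with h | h <;> rw [h] at hl ⊢ <;> linarith
  obtain ⟨w, r, hw, ht⟩ := exists_isDyck_append_false
    ⟨t.length, by rw [← length_orient b, height_of_length_le le_rfl, hrise]; norm_num⟩
  refine ⟨b, w, orient b r, hw, ?_⟩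
  rw [prime_append, orient_orient, ← ht]
  simp [orient, Function.comp_def]

lemma prime_append_inj {b b' : Bool} {w w' r r' : List Bool} (hw : IsDyck w) (hw' : IsDyck w')
    (h : prime b w ++ r = prime b' w' ++ r') : b = b' ∧ w = w' ∧ r = r' := by
  obtain rfl : b = b' := by simpa [prime, orient] using congrArg List.head? h
  rw [prime_append, prime_append] at h
  obtain ⟨rfl, hr⟩ := isDyck_append_false_inj hw hw' (by simpa using congrArg (orient b) h)
  exact ⟨rfl, rfl, by simpa using congrArg (orient b) hr⟩

lemma below_prime (b : Bool) {w : List Bool} (hw : IsDyck w) :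
    below (prime b w) = bif b then 0 else w.length + 2 := by
  have hup := (isDyck_prime_true hw).2
  cases b
  · rw [cond_false, ← length_prime false, below_eq_length_of_nonpos]
    intro p
    have := hup p
    rw [prime, orient_true] at this
    rw [prime, height_orient, stepVal_false]
    linarith
  · exact below_eq_zero_of_nonneg hup

lemma isDyck_prime_append {b : Bool} {w : List Bool} (hw : IsDyck w) (r : List Bool) :
    IsDyck (prime b w ++ r) ↔ b = true ∧ IsDyck r := by
  have hprime := rise_prime b hw.1
  constructor
  · rintro ⟨hrise, hnonneg⟩
    refine ⟨?_, by simpa [hprime] using hrise, fun p => ?_⟩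
    · have := hnonneg 1
      cases b
      · simp [prime, orient, height] at this
      · rfl
    · rw [← height_append_length_add hprime r]
      exact hnonneg _
  · rintro ⟨rfl, hr⟩
    refine ⟨by simp [hprime, hr.1], fun p => ?_⟩
    rw [height_append]
    linarith [(isDyck_prime_true hw).2 p, hr.2 (p - (prime true w).length)]

def lists (L : ℕ) : Finset (List Bool) := univ.image (List.ofFn (n := L))

@[simp] lemma mem_lists {L : ℕ} {l : List Bool} : l ∈ lists L ↔ l.length = L := by
  refine ⟨?_, fun h => ?_⟩
  · rw [lists, mem_image]
    rintro ⟨f, -, rfl⟩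
    exact List.length_ofFn
  · subst h
    exact mem_image.mpr ⟨l.get, mem_univ _, List.ofFn_get l⟩

def paths (n : ℕ) : Finset (List Bool) := {l ∈ lists (2 * n) | rise l = 0}

open scoped Classical in
noncomputable def dyckPaths (n : ℕ) : Finset (List Bool) := {l ∈ paths n | IsDyck l}

@[simp] lemma mem_paths {n : ℕ} {l : List Bool} :
    l ∈ paths n ↔ l.length = 2 * n ∧ rise l = 0 := by
  simp [paths]

@[simp] lemma mem_dyckPaths {n : ℕ} {l : List Bool} :
    l ∈ dyckPaths n ↔ l.length = 2 * n ∧ IsDyck l := by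
  classical
  rw [dyckPaths, mem_filter, mem_paths, IsDyck]
  tauto

lemma paths_zero : paths 0 = {[]} := by
  ext l
  simp +contextual [List.length_eq_zero_iff]

lemma sum_paths_succ {M : Type*} [AddCommMonoid M] (f : List Bool → M) (n : ℕ) :
    ∑ l ∈ paths (n + 1), f l = ∑ p ∈ antidiagonal n, ∑ w ∈ dyckPaths p.1, ∑ b : Bool,
      ∑ r ∈ paths p.2, f (prime b w ++ r) := by
  symm
  calc _ = ∑ x ∈ (antidiagonal n).sigma fun p => dyckPaths p.1 ×ˢ univ ×ˢ paths p.2,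
        f (prime x.2.2.1 x.2.1 ++ x.2.2.2) := by simp only [sum_sigma, sum_product]
    _ = _ := by
      refine sum_bij (fun x _ => prime x.2.2.1 x.2.1 ++ x.2.2.2) ?_ ?_ ?_ (fun _ _ => rfl)
      · rintro ⟨⟨i, j⟩, w, b, r⟩ hx
        simp only [mem_sigma, HasAntidiagonal.mem_antidiagonal, mem_product, mem_univ, true_and,
          mem_dyckPaths, mem_paths] at hx
        obtain ⟨hij, ⟨hw, hdyck⟩, hr, hrise⟩ := hx
        simp only [mem_paths, List.length_append, length_prime, rise_append,
          rise_prime b hdyck.1, hrise, hw, hr, add_zero, and_true]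
        omega
      · rintro ⟨⟨i, j⟩, w, b, r⟩ hx ⟨⟨i', j'⟩, w', b', r'⟩ hx' h
        simp only [mem_sigma, HasAntidiagonal.mem_antidiagonal, mem_product, mem_univ, true_and,
          mem_dyckPaths, mem_paths] at hx hx'
        obtain ⟨rfl, rfl, rfl⟩ := prime_append_inj hx.2.1.2 hx'.2.1.2 h
        obtain ⟨rfl, rfl⟩ : i = i' ∧ j = j' := by omega
        rfl
      · intro l hl
        rw [mem_paths] at hl
        obtain ⟨b, w, r, hw, rfl⟩ := exists_prime_append hl.2 (by rintro rfl; simp at hl)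
        have hpar := rise_emod_two w
        rw [List.length_append, length_prime, rise_append, rise_prime b hw.1, zero_add] at hl
        refine ⟨⟨(w.length / 2, n - w.length / 2), w, b, r⟩, ?_, rfl⟩
        simp only [mem_sigma, HasAntidiagonal.mem_antidiagonal, mem_product, mem_univ, true_and,
          mem_dyckPaths, mem_paths]
        rw [hw.1] at hpar
        exact ⟨by omega, ⟨by omega, hw⟩, by omega, hl.2⟩

lemma card_dyckPaths (n : ℕ) : #(dyckPaths n) = catalan n := by
  classical
  induction n using Nat.strong_induction_on with
  | _ n ih =>
  rcases n with _ | n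
  · rw [dyckPaths, paths_zero, filter_singleton, if_pos ⟨rfl, fun _ => by simp [height]⟩]
    simp
  · rw [dyckPaths, card_filter, sum_paths_succ, catalan_succ']
    refine sum_congr rfl fun p hp => ?_
    have hsum : ∀ w ∈ dyckPaths p.1,
        ∑ b : Bool, ∑ r ∈ paths p.2, (if IsDyck (prime b w ++ r) then 1 else 0) =
          #(dyckPaths p.2) := fun w hw => by
      rw [dyckPaths, card_filter]
      simp [isDyck_prime_append (mem_dyckPaths.mp hw).2]
    have hp := HasAntidiagonal.mem_antidiagonal.mp hp
    rw [sum_congr rfl hsum, sum_const, smul_eq_mul, ih _ (by omega), ih _ (by omega)]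

open PowerSeries

def weight (l : List Bool) : ℤ⟦X⟧ := mk fun k => if below l = 2 * k then 1 else 0

lemma weight_prime_append (b : Bool) {j : ℕ} {w : List Bool} (hw : w ∈ dyckPaths j)
    (r : List Bool) : weight (prime b w ++ r) = (bif b then 1 else X ^ (j + 1)) * weight r := by
  obtain ⟨hlen, hdyck⟩ := mem_dyckPaths.mp hw
  ext k
  rw [weight, coeff_mk, below_append (rise_prime b hdyck.1), below_prime b hdyck]
  cases b
  · rw [cond_false, cond_false, coeff_X_pow_mul', weight, hlen]
    by_cases hk : j + 1 ≤ k
    · rw [if_pos hk, coeff_mk]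
      exact if_congr (by omega) rfl rfl
    · rw [if_neg hk, if_neg (by omega)]
  · simp [weight]

end LatticePath

open LatticePath PowerSeries

lemma aCount_eq_card (n k : ℕ) : aCount n k = #{l ∈ paths n | below l = 2 * k} := by
  rw [aCount, paths, filter_filter, lists, filter_image,
    card_image_of_injective _ List.ofFn_injective]
  congr 1
  refine filter_congr fun f _ => ?_
  rw [card_belowSteps, ← height_of_length_le (List.length_ofFn (f := f)).le]
  rfl

lemma coeff_Ngf (n : ℕ) : coeff n Ngf = ∑ l ∈ paths n, weight l := by
  ext k
  simp [Ngf, weight, map_sum, aCount_eq_card]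

lemma coeff_zero_Ngf : coeff 0 Ngf = 1 := by
  ext k
  simp [coeff_Ngf, paths_zero, weight, below, coeff_one, eq_comm]

lemma coeff_Ngf_succ (n : ℕ) : coeff (n + 1) Ngf =
    ∑ p ∈ antidiagonal n, (catalan p.1 : ℤ⟦X⟧) * (1 + X ^ (p.1 + 1)) * coeff p.2 Ngf := by
  rw [coeff_Ngf, sum_paths_succ]
  refine sum_congr rfl fun p _ => ?_
  calc _ = ∑ _w ∈ dyckPaths p.1, (1 + X ^ (p.1 + 1)) * coeff p.2 Ngf := by
        refine sum_congr rfl fun w hw => ?_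
        simp only [weight_prime_append _ hw, ← mul_sum, ← coeff_Ngf, Fintype.sum_bool,
          cond_true, cond_false]
        ring
    _ = _ := by rw [sum_const, card_dyckPaths, nsmul_eq_mul, mul_assoc]

lemma coeff_cx_add_tvar_mul_ctx (n : ℕ) :
    coeff n (cx + tvar * ctx) = (catalan n : ℤ⟦X⟧) * (1 + X ^ (n + 1)) := by
  simp only [cx, ctx, tvar, map_add, coeff_mk, coeff_C_mul, Int.cast_natCast]
  ring

lemma Ngf_eq_one_add_X_mul : Ngf = 1 + X * ((cx + tvar * ctx) * Ngf) := by
  ext n : 1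
  rcases n with _ | n
  · simp [coeff_zero_Ngf]
  · rw [coeff_Ngf_succ, map_add, coeff_one, if_neg n.succ_ne_zero, zero_add, coeff_succ_X_mul,
      coeff_mul]
    exact sum_congr rfl fun p _ => by rw [coeff_cx_add_tvar_mul_ctx]

lemma coeff_Ngf_eq_catalan_mul_geom_sum (n : ℕ) :
    coeff n Ngf = (catalan n : ℤ⟦X⟧) * ∑ i ∈ range (n + 1), X ^ i := by
  induction n using Nat.strong_induction_on with
  | _ n ih =>
  rcases n with _ | n
  · simp [coeff_zero_Ngf]
  set S : ℕ → ℤ⟦X⟧ := fun m => ∑ i ∈ range (m + 1), X ^ i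
  set C : ℕ × ℕ → ℤ⟦X⟧ := fun p => catalan p.1 * catalan p.2
  have hS : ∀ p ∈ antidiagonal n, S p.2 + X ^ (p.2 + 1) * S p.1 = S (n + 1) := by
    intro p hp
    rw [HasAntidiagonal.mem_antidiagonal] at hp
    simp only [S, geom_sum_add_pow_mul_geom_sum]
    congr 2
    omega
  calc coeff (n + 1) Ngf
      = ∑ p ∈ antidiagonal n, C p * S p.2 +
          ∑ p ∈ antidiagonal n, C p * (X ^ (p.1 + 1) * S p.2) := by
        rw [coeff_Ngf_succ, ← sum_add_distrib]
        refine sum_congr rfl fun p hp => ?_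
        rw [ih p.2 (by have := HasAntidiagonal.mem_antidiagonal.mp hp; omega)]
        ring
    _ = ∑ p ∈ antidiagonal n, C p * S (n + 1) := by
        rw [← Nat.sum_antidiagonal_swap (f := fun p => C p * (X ^ (p.1 + 1) * S p.2)),
          ← sum_add_distrib]
        refine sum_congr rfl fun p hp => ?_
        rw [← hS p hp]
        simp only [C, Prod.fst_swap, Prod.snd_swap]
        ring
    _ = _ := by rw [← sum_mul, catalan_succ']; push_cast; rfl

lemma aCount_eq_ite (n k : ℕ) : aCount n k = if k ≤ n then catalan n else 0 := by
  have h := congrArg (coeff k) (coeff_Ngf_eq_catalan_mul_geom_sum n)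
  rw [← map_natCast (C (R := ℤ)), coeff_C_mul, map_sum] at h
  simp only [Ngf, coeff_mk, coeff_X_pow, sum_ite_eq, mem_range, Nat.lt_succ_iff] at h
  split_ifs with hk <;> simp_all

/-- N(t,x) = 1/(1 − x·c(x) − t·x·c(tx)); consequently a(n,k) = C_n for 0 ≤ k ≤ n
and a(n,k) = 0 for k > n. -/
theorem Ngf_identity :
    (1 - PowerSeries.X * cx - tvar * PowerSeries.X * ctx) * Ngf = 1 ∧
    (∀ n k : ℕ, k ≤ n → aCount n k = catalan n) ∧
    (∀ n k : ℕ, n < k → aCount n k = 0) := by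
  refine ⟨by linear_combination Ngf_eq_one_add_X_mul, fun n k hk => ?_, fun n k hk => ?_⟩
  · rw [aCount_eq_ite, if_pos hk]
  · rw [aCount_eq_ite, if_neg (by omega)]
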